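/- For all nonnegative integers a, b, c, the T-shape tree S_{a,b,c} satisfies Q_{S_{a,b,c}}(2) = a + b + c + 2 − abc, where Q is the characteristic polynomial of its adjacency matrix. -/

import Mathlib

open Polynomial

/-- The characteristic polynomial (over `ℝ`) of the adjacency matrix of a finite graph. -/
noncomputable def graphCharpoly {V : Type*} [Fintype V] [DecidableEq V]
    (G : SimpleGraph V) : Polynomial ℝ :=
  letI := Classical.decRel G.Adj
  (G.adjMatrix ℝ).charpoly

/-- `Q_{P_n}`: the characteristic polynomial of the path on `n` vertices. -/
noncomputable def Qpath (n : ℕ) : Polynomial ℝ := graphCharpoly (SimpleGraph.pathGraph n)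

/-- `Q_{C_n}`: the characteristic polynomial of the cycle on `n` vertices. -/
noncomputable def Qcycle (n : ℕ) : Polynomial ℝ := graphCharpoly (SimpleGraph.cycleGraph n)

/-- The T-shape tree `S_{a,b,c}`: a central vertex with three attached paths of
`a`, `b`, `c` vertices respectively (for `a = 0` this is the path `P_{b+c+1}`). -/
def tShape (a b c : ℕ) : SimpleGraph (Option (Fin a ⊕ Fin b ⊕ Fin c)) :=
  SimpleGraph.fromRel (fun x y =>
    match x, y with
    | none, some (Sum.inl j) => (j : ℕ) = 0
    | none, some (Sum.inr (Sum.inl j)) => (j : ℕ) = 0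
    | none, some (Sum.inr (Sum.inr j)) => (j : ℕ) = 0
    | some (Sum.inl i), some (Sum.inl j) => (i : ℕ) + 1 = (j : ℕ)
    | some (Sum.inr (Sum.inl i)), some (Sum.inr (Sum.inl j)) => (i : ℕ) + 1 = (j : ℕ)
    | some (Sum.inr (Sum.inr i)), some (Sum.inr (Sum.inr j)) => (i : ℕ) + 1 = (j : ℕ)
    | _, _ => False)

/-!
`Q(2) = det (2I - A)`. Listing the centre last, `2I - A` is the block-diagonal matrix
`D = diag(2I - A(P_a), 2I - A(P_b), 2I - A(P_c))` bordered by `-u`, where `u` is the indicator of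
the three vertices adjacent to the centre. Expanding along the first row twice gives
`det (2I - A(P_k)) = k + 1`, and by the adjugate formula the corner entry of its inverse is
`det (2I - A(P_{k-1})) / det (2I - A(P_k)) = k / (k + 1)`. The Schur complement then yields
`Q(2) = (a+1)(b+1)(c+1) (2 - a/(a+1) - b/(b+1) - c/(c+1)) = a + b + c + 2 - abc`.
-/

open Matrix SimpleGraph

namespace Matrix

variable {n : ℕ}

theorem det_succ_of_apply_succ_zero_eq_zero {R : Type*} [CommRing R]
    (M : Matrix (Fin (n + 1)) (Fin (n + 1)) R) (h : ∀ i : Fin n, M i.succ 0 = 0) :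
    M.det = M 0 0 * (M.submatrix Fin.succ Fin.succ).det := by
  rw [det_succ_column_zero, Fin.sum_univ_succ, Fintype.sum_eq_zero _ fun i => by simp [h]]
  simp

theorem det_succ_succ_of_tridiagonal_corner {R : Type*} [CommRing R]
    (M : Matrix (Fin (n + 2)) (Fin (n + 2)) R)
    (hrow : ∀ j : Fin n, M 0 j.succ.succ = 0) (hcol : ∀ i : Fin n, M i.succ.succ 0 = 0) :
    M.det = M 0 0 * (M.submatrix Fin.succ Fin.succ).det
      - M 0 1 * M 1 0 * ((M.submatrix Fin.succ Fin.succ).submatrix Fin.succ Fin.succ).det := by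
  have hminor : (M.submatrix Fin.succ (Fin.succ 0).succAbove).det =
      M 1 0 * ((M.submatrix Fin.succ Fin.succ).submatrix Fin.succ Fin.succ).det := by
    rw [det_succ_of_apply_succ_zero_eq_zero _ fun i => by simpa using hcol i]
    rfl
  rw [det_succ_row_zero, Fin.sum_univ_succ, Fin.sum_univ_succ,
    Fintype.sum_eq_zero _ fun j => by simp [hrow], hminor]
  simp only [Fin.coe_ofNat_eq_mod, Nat.zero_mod, pow_zero, one_mul, Fin.succAbove_zero,
    Fin.succ_zero_eq_one, Nat.one_mod, pow_one, neg_mul, submatrix_submatrix, add_zero]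
  ring

theorem inv_apply_zero_zero {K : Type*} [Field K] (M : Matrix (Fin (n + 1)) (Fin (n + 1)) K) :
    M⁻¹ 0 0 = (M.submatrix Fin.succ Fin.succ).det / M.det := by
  rw [inv_def, smul_apply, adjugate_fin_succ_eq_det_submatrix, Fin.succAbove_zero,
    Ring.inverse_eq_inv]
  simp [div_eq_inv_mul]

variable {m l R : Type*} [Fintype m] [DecidableEq m] [Fintype l] [DecidableEq l] [CommRing R]

theorem det_fromBlocks_replicateCol_replicateRow {A : Matrix m m R} (hA : IsUnit A.det)
    (u v : m → R) (d : R) :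
    (fromBlocks A (replicateCol Unit u) (replicateRow Unit v) (scalar Unit d)).det =
      A.det * (d - v ⬝ᵥ A⁻¹ *ᵥ u) := by
  have := A.invertibleOfIsUnitDet hA
  rw [det_fromBlocks₁₁, invOf_eq_nonsing_inv, det_unique (_ - _), Matrix.mul_assoc,
    ← replicateCol_mulVec, Matrix.sub_apply, replicateRow_mul_replicateCol_apply, scalar_apply]
  rfl

theorem sum_elim_dotProduct_inv_fromBlocks_mulVec (A : Matrix m m R) (B : Matrix l l R)
    (hAB : IsUnit A ↔ IsUnit B) (x x' : m → R) (y y' : l → R) :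
    Sum.elim x y ⬝ᵥ (fromBlocks A 0 0 B)⁻¹ *ᵥ Sum.elim x' y' =
      x ⬝ᵥ A⁻¹ *ᵥ x' + y ⬝ᵥ B⁻¹ *ᵥ y' := by
  rw [inv_fromBlocks_zero₁₂_of_isUnit_iff _ _ _ hAB]
  simp [fromBlocks_mulVec]

end Matrix

theorem graphCharpoly_eval {V : Type*} [Fintype V] [DecidableEq V] (G : SimpleGraph V)
    [DecidableRel G.Adj] (t : ℝ) :
    (graphCharpoly G).eval t = (scalar V t - G.adjMatrix ℝ).det := by
  rw [graphCharpoly, eval_charpoly]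
  congr

instance (k : ℕ) : DecidableRel (pathGraph k).Adj :=
  fun _ _ => decidable_of_iff' _ pathGraph_adj

noncomputable def pathMatrix (k : ℕ) : Matrix (Fin k) (Fin k) ℝ :=
  scalar (Fin k) 2 - (pathGraph k).adjMatrix ℝ

theorem pathMatrix_apply {k : ℕ} (i j : Fin k) : pathMatrix k i j =
    if i = j then 2 else if (i : ℕ) + 1 = j ∨ (j : ℕ) + 1 = i then -1 else 0 := by
  by_cases h : i = j
  · simp [pathMatrix, h]
  · simp only [pathMatrix, scalar_apply, Matrix.sub_apply, diagonal_apply_ne _ h,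
      adjMatrix_apply, pathGraph_adj, zero_sub, if_neg h]
    split_ifs <;> simp

theorem pathMatrix_submatrix_succ (k : ℕ) :
    (pathMatrix (k + 1)).submatrix Fin.succ Fin.succ = pathMatrix k := by
  ext i j
  simp [pathMatrix_apply]

theorem det_pathMatrix (k : ℕ) : (pathMatrix k).det = k + 1 := by
  induction k using Nat.twoStepInduction with
  | zero => simp
  | one => norm_num [pathMatrix_apply]
  | more n ih₁ ih₂ =>
    have h00 : pathMatrix (n + 2) 0 0 = 2 := by simp [pathMatrix_apply]
    have h01 : pathMatrix (n + 2) 0 1 = -1 := by simp [pathMatrix_apply]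
    have h10 : pathMatrix (n + 2) 1 0 = -1 := by simp [pathMatrix_apply]
    rw [det_succ_succ_of_tridiagonal_corner _ (fun j => ?_) (fun i => ?_),
      pathMatrix_submatrix_succ, pathMatrix_submatrix_succ, ih₁, ih₂, h00, h01, h10]
    · push_cast
      ring
    · simp [pathMatrix_apply, (Fin.succ_ne_zero _).symm]
    · simp [pathMatrix_apply]

theorem inv_pathMatrix_zero_zero (k : ℕ) :
    (pathMatrix (k + 1))⁻¹ 0 0 = (k + 1) / (k + 2) := by
  rw [inv_apply_zero_zero, pathMatrix_submatrix_succ, det_pathMatrix, det_pathMatrix]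
  push_cast
  ring

theorem isUnit_pathMatrix (k : ℕ) : IsUnit (pathMatrix k) := by
  rw [isUnit_iff_isUnit_det, det_pathMatrix]
  exact (Nat.cast_add_one_ne_zero k).isUnit

def pathEnd (k : ℕ) : Fin k → ℝ := fun i => if (i : ℕ) = 0 then 1 else 0

theorem pathEnd_dotProduct_inv_pathMatrix_mulVec (k : ℕ) :
    pathEnd k ⬝ᵥ (pathMatrix k)⁻¹ *ᵥ pathEnd k = k / (k + 1) := by
  cases k with
  | zero => simp
  | succ k =>
    have hend : pathEnd (k + 1) = Pi.single 0 1 := by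
      ext i
      simp [pathEnd, Pi.single_apply, Fin.val_eq_zero_iff]
    rw [hend, single_dotProduct, mulVec_single_one, one_mul, col_apply, inv_pathMatrix_zero_zero]
    push_cast
    ring

theorem tShape_scalar_two_sub_adjMatrix_submatrix (a b c : ℕ) [DecidableRel (tShape a b c).Adj] :
    (scalar _ 2 - (tShape a b c).adjMatrix ℝ).submatrix
        (Equiv.optionEquivSumPUnit _).symm (Equiv.optionEquivSumPUnit _).symm =
      fromBlocks (fromBlocks (pathMatrix a) 0 0 (fromBlocks (pathMatrix b) 0 0 (pathMatrix c)))
        (replicateCol Unit (-Sum.elim (pathEnd a) (Sum.elim (pathEnd b) (pathEnd c))))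
        (replicateRow Unit (-Sum.elim (pathEnd a) (Sum.elim (pathEnd b) (pathEnd c))))
        (scalar Unit 2) := by
  ext x y
  rcases x with (i | i | i) | _ <;> rcases y with (j | j | j) | _ <;>
    simp only [submatrix_apply, Matrix.sub_apply, adjMatrix_apply] <;>
    simp [pathMatrix, pathGraph_adj, pathEnd, tShape, Fin.ext_iff, diagonal_apply]
  -- within an arm, `fromRel` adds the redundant condition `i ≠ j` to path adjacency
  all_goals exact if_congr ⟨And.right, fun h => ⟨by omega, h⟩⟩ rfl rfl

/-- `Q_{S_{a,b,c}}(2) = a + b + c + 2 − abc`. -/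
theorem tShape_charpoly_eval_two (a b c : ℕ) :
    (graphCharpoly (tShape a b c)).eval 2 =
      (a : ℝ) + b + c + 2 - a * b * c := by
  classical
  set D := fromBlocks (pathMatrix a) 0 0 (fromBlocks (pathMatrix b) 0 0 (pathMatrix c))
  set u := Sum.elim (pathEnd a) (Sum.elim (pathEnd b) (pathEnd c))
  have hBC : IsUnit (fromBlocks (pathMatrix b) 0 0 (pathMatrix c)) :=
    isUnit_fromBlocks_zero₁₂.mpr ⟨isUnit_pathMatrix b, isUnit_pathMatrix c⟩
  have hD : IsUnit D := isUnit_fromBlocks_zero₁₂.mpr ⟨isUnit_pathMatrix a, hBC⟩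
  have hdet : D.det = (a + 1) * ((b + 1) * (c + 1)) := by
    simp only [D, det_fromBlocks_zero₁₂, det_pathMatrix]
  have hquad : u ⬝ᵥ D⁻¹ *ᵥ u = a / (a + 1) + (b / (b + 1) + c / (c + 1)) := by
    rw [sum_elim_dotProduct_inv_fromBlocks_mulVec _ _ (iff_of_true (isUnit_pathMatrix a) hBC),
      sum_elim_dotProduct_inv_fromBlocks_mulVec _ _
        (iff_of_true (isUnit_pathMatrix b) (isUnit_pathMatrix c)),
      pathEnd_dotProduct_inv_pathMatrix_mulVec, pathEnd_dotProduct_inv_pathMatrix_mulVec,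
      pathEnd_dotProduct_inv_pathMatrix_mulVec]
  rw [graphCharpoly_eval, ← det_submatrix_equiv_self (Equiv.optionEquivSumPUnit _).symm,
    tShape_scalar_two_sub_adjMatrix_submatrix,
    det_fromBlocks_replicateCol_replicateRow ((isUnit_iff_isUnit_det D).mp hD),
    mulVec_neg, dotProduct_neg, neg_dotProduct, neg_neg, hdet, hquad]
  field_simp
  ring
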